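/- arXiv:2603.25679 — 4 statements merged into one kernel-verified Lean document; each statement's English description precedes it below -/
import Mathlib

section
/- If d ≤ n, then every finitely n-presented R-module of projective dimension at most d is finitely ∞-presented, i.e., FP_n^{≤d}(R) ⊆ FP_∞(R); consequently FP_n^{≤d}(R) is closed under kernels of epimorphisms between its members. -/
/-!
Schanuel's lemma shows that the kernel of *any* finite free (resp. projective) cover of a module
in `FP_{n+1}` (resp. of projective dimension `≤ d + 1`) lies in `FP_n` (resp. has projective
dimension `≤ d`), and the horseshoe construction gives the two-out-of-three properties of both
classes along short exact sequences. If `M ∈ FP_n` has projective dimension `≤ d ≤ n`, the kernel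
of a finite free presentation of `M` is in `FP_{n-1}` with projective dimension `≤ d - 1`, so
induction on `d` ends at a finitely generated projective module, which is `FP_∞`. For an
epimorphism `M → N` in the class, `N` is then in `FP_{n+1}`, and `0 → ker → M → N → 0` puts the
kernel in `FP_n` with projective dimension `≤ d`.
-/

universe u

/-- `M` is a finitely `n`-presented `R`-module. -/
def FinNPres (R : Type u) [Ring R] : ℕ → (M : Type u) → [AddCommGroup M] → [Module R M] → Prop
  | 0, M, _, _ => Module.Finite R M
  | n+1, M, _, _ => ∃ (k : ℕ) (f : (Fin k → R) →ₗ[R] M), Function.Surjective f ∧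
      FinNPres R n (LinearMap.ker f)

/-- `M` has projective dimension at most `d` (finite `d`). -/
def ProjDimLE (R : Type u) [Ring R] : ℕ → (M : Type u) → [AddCommGroup M] → [Module R M] → Prop
  | 0, M, _, _ => Module.Projective R M
  | d+1, M, _, _ => ∃ (ι : Type u) (f : (ι →₀ R) →ₗ[R] M), Function.Surjective f ∧
      ProjDimLE R d (LinearMap.ker f)

open LinearMap Function

section

variable {R : Type*} [Ring R] {A B C G N : Type*}
  [AddCommGroup A] [Module R A] [AddCommGroup B] [Module R B] [AddCommGroup C] [Module R C]
  [AddCommGroup G] [Module R G] [AddCommGroup N] [Module R N]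
  {i : A →ₗ[R] B} {f : B →ₗ[R] C}

theorem Function.Exact.nonempty_linearEquiv_prod [Module.Projective R C] (hex : Exact i f)
    (hi : Injective i) (hf : Surjective f) : Nonempty (B ≃ₗ[R] (A × C)) := by
  obtain ⟨s, hs⟩ := Module.projective_lifting_property f LinearMap.id hf
  exact ⟨(hex.splitSurjectiveEquiv hi ⟨s, hs⟩).1⟩

theorem Module.Projective.of_exact [Module.Projective R B] [Module.Projective R C]
    (hex : Exact i f) (hi : Function.Injective i) (hf : Surjective f) :
    Module.Projective R A := by
  obtain ⟨e⟩ := hex.nonempty_linearEquiv_prod hi hf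
  have := Module.Projective.of_equiv e
  exact .of_split (inl R A C) (fst R A C) rfl

theorem LinearMap.nonempty_ker_prod_equiv_ker_coprod [Module.Projective R B] {g : A →ₗ[R] N}
    (hg : Surjective g) (h : B →ₗ[R] N) : Nonempty ((ker g × B) ≃ₗ[R] ker (g.coprod h)) := by
  let j : ker g →ₗ[R] ker (g.coprod h) :=
    codRestrict _ (inl R A B ∘ₗ (ker g).subtype) fun a ↦ by simp
  let π : ker (g.coprod h) →ₗ[R] B := snd R A B ∘ₗ (ker (g.coprod h)).subtype
  have hj : Injective j := fun a b hab ↦ Subtype.ext congr(($hab : A × B).1)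
  have hex : Exact j π := by
    rintro ⟨⟨a, b⟩, hab⟩
    refine ⟨fun (hb : b = 0) ↦ ?_, fun ⟨a', ha'⟩ ↦ by rw [← ha']; rfl⟩
    subst hb
    exact ⟨⟨a, by simpa using hab⟩, rfl⟩
  have hπ : Surjective π := fun b ↦ by
    obtain ⟨a, ha⟩ := hg (-h b)
    exact ⟨⟨(a, b), by simp [ha]⟩, rfl⟩
  obtain ⟨e⟩ := hex.nonempty_linearEquiv_prod hj hπ
  exact ⟨e.symm⟩

theorem Module.Projective.schanuel [Module.Projective R A] [Module.Projective R B]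
    {f : A →ₗ[R] N} {g : B →ₗ[R] N} (hf : Surjective f) (hg : Surjective g) :
    Nonempty ((ker f × B) ≃ₗ[R] (ker g × A)) := by
  -- both sides are the pullback `{(a, b) | f a = g b}`, split along one projection or the other
  obtain ⟨e₁⟩ := nonempty_ker_prod_equiv_ker_coprod hf (-g)
  obtain ⟨e₂⟩ := nonempty_ker_prod_equiv_ker_coprod hg (-f)
  have hswap : ker (f.coprod (-g)) =
      (ker (g.coprod (-f))).comap (LinearEquiv.prodComm R A B).toLinearMap := by
    ext ⟨a, b⟩
    simp only [mem_ker, Submodule.mem_comap, coprod_apply, LinearMap.neg_apply,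
      LinearEquiv.coe_coe, LinearEquiv.prodComm_apply, Prod.swap_prod_mk, add_neg_eq_zero]
    exact eq_comm
  exact ⟨e₁.trans ((LinearEquiv.ofEq _ _ hswap).trans
    (((LinearEquiv.prodComm R A B).ofSubmodule' _).trans e₂.symm))⟩

theorem Function.Exact.exists_exact_ker_comp (hex : Exact i f) (hi : Injective i)
    {p : G →ₗ[R] B} (hp : Surjective p) :
    ∃ (j : ker p →ₗ[R] ker (f ∘ₗ p)) (ρ : ker (f ∘ₗ p) →ₗ[R] A),
      Injective j ∧ Exact j ρ ∧ Surjective ρ := by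
  have hle : ker p ≤ ker (f ∘ₗ p) := fun x (hx : p x = 0) ↦ by simp [hx]
  have hmaps : ∀ x ∈ ker (f ∘ₗ p), p x ∈ ker f := fun x hx ↦ hx
  let e : A ≃ₗ[R] ker f :=
    (LinearEquiv.ofInjective i hi).trans (.ofEq _ _ hex.linearMap_ker_eq.symm)
  refine ⟨Submodule.inclusion hle, e.symm.toLinearMap ∘ₗ p.restrict hmaps,
    Submodule.inclusion_injective hle, ?_, ?_⟩
  · rw [LinearEquiv.postcomp_exact_iff_exact]
    refine fun x ↦ ⟨fun hx ↦ ⟨⟨x, congr(($hx : B))⟩, rfl⟩, ?_⟩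
    rintro ⟨y, rfl⟩
    exact Subtype.ext y.2
  · refine e.symm.surjective.comp ?_
    rintro ⟨b, hb⟩
    obtain ⟨x, rfl⟩ := hp b
    exact ⟨⟨x, hb⟩, rfl⟩

theorem Function.Exact.exists_horseshoe {FA FC : Type*} [AddCommGroup FA] [Module R FA]
    [AddCommGroup FC] [Module R FC] [Module.Projective R FC] (hex : Exact i f)
    (hi : Injective i) (hf : Surjective f) {pA : FA →ₗ[R] A} (hpA : Surjective pA)
    {pC : FC →ₗ[R] C} (hpC : Surjective pC) :
    ∃ h : (FA × FC) →ₗ[R] B, Surjective h ∧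
      ∃ (j : ker pA →ₗ[R] ker h) (π : ker h →ₗ[R] ker pC),
        Injective j ∧ Exact j π ∧ Surjective π := by
  obtain ⟨t, ht⟩ := Module.projective_lifting_property f pC hf
  have ht' : ∀ y, f (t y) = pC y := LinearMap.congr_fun ht
  have hfi : ∀ a, f (i a) = 0 := hex.apply_apply_eq_zero
  let h : (FA × FC) →ₗ[R] B := (i ∘ₗ pA).coprod t
  refine ⟨h, fun b ↦ ?_, ?_⟩
  · obtain ⟨y, hy⟩ := hpC (f b)
    obtain ⟨a, ha⟩ := (hex (b - t y)).mp (by simp [ht', hy])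
    obtain ⟨x, rfl⟩ := hpA a
    exact ⟨(x, y), by simp [h, ha]⟩
  have hmaps : ∀ x : ker h, (x : FA × FC).2 ∈ ker pC := fun x ↦ by
    have hx : i (pA x.1.1) + t x.1.2 = 0 := x.2
    rw [mem_ker, ← ht', ← neg_eq_zero, ← map_neg, ← eq_neg_of_add_eq_zero_left hx, hfi]
  let j : ker pA →ₗ[R] ker h := codRestrict _ (inl R FA FC ∘ₗ (ker pA).subtype) fun a ↦ by
    simp [h, show pA a = 0 from a.2]
  refine ⟨j, codRestrict _ (snd R FA FC ∘ₗ (ker h).subtype) hmaps,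
    fun a b hab ↦ Subtype.ext congr(($hab : FA × FC).1), ?_, ?_⟩
  · rintro ⟨⟨x, y⟩, hxy⟩
    refine ⟨fun hy ↦ ?_, fun ⟨a, ha⟩ ↦ by rw [← ha]; rfl⟩
    obtain rfl : y = 0 := congr(($hy : FC))
    have hx : pA x = 0 := hi (by simpa [h] using hxy)
    exact ⟨⟨x, hx⟩, rfl⟩
  · rintro ⟨y, hy⟩
    obtain ⟨a, ha⟩ := (hex (t y)).mp (by simpa [ht'] using hy)
    obtain ⟨x, rfl⟩ := hpA a
    exact ⟨⟨(-x, y), by simp [h, ha]⟩, rfl⟩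

end

section

variable {R : Type u} [Ring R] {A B C F M N P : Type u}
  [AddCommGroup A] [Module R A] [AddCommGroup B] [Module R B] [AddCommGroup C] [Module R C]
  [AddCommGroup F] [Module R F] [AddCommGroup M] [Module R M] [AddCommGroup N] [Module R N]
  [AddCommGroup P] [Module R P]

namespace FinNPres

theorem of_linearEquiv : ∀ {n : ℕ} {M N : Type u} [AddCommGroup M] [Module R M]
    [AddCommGroup N] [Module R N], (M ≃ₗ[R] N) → FinNPres R n M → FinNPres R n N
  | 0, M, _, _, _, _, _, e, hM => by
    have : Module.Finite R M := hM
    exact .equiv e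
  | _ + 1, _, _, _, _, _, _, e, ⟨k, f, hf, hker⟩ =>
    ⟨k, e.toLinearMap ∘ₗ f, e.surjective.comp hf, by rwa [ker_comp_of_ker_eq_bot f e.ker]⟩

theorem finite : ∀ {n : ℕ}, FinNPres R n M → Module.Finite R M
  | 0, h => h
  | _ + 1, ⟨_, f, hf, _⟩ => .of_surjective f hf

theorem of_finite_projective : ∀ (n : ℕ) (M : Type u) [AddCommGroup M] [Module R M]
    [Module.Finite R M] [Module.Projective R M], FinNPres R n M
  | 0, _, _, _, h, _ => h
  | n + 1, M, _, _, _, _ => by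
    obtain ⟨k, f, hf⟩ := Module.Finite.exists_fin' R M
    have hex := exact_subtype_ker_map f
    obtain ⟨e⟩ := hex.nonempty_linearEquiv_prod (ker f).injective_subtype hf
    have : Module.Finite R (ker f) :=
      .of_surjective (fst R _ M ∘ₗ e.toLinearMap) (Prod.fst_surjective.comp e.surjective)
    have := Module.Projective.of_exact hex (ker f).injective_subtype hf
    exact ⟨k, f, hf, of_finite_projective n _⟩

theorem succ_of_linearEquiv {n k : ℕ} (e : (Fin k → R) ≃ₗ[R] F) {f : F →ₗ[R] M}
    (hf : Surjective f) (hker : FinNPres R n (ker f)) : FinNPres R (n + 1) M :=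
  ⟨k, f ∘ₗ e.toLinearMap, hf.comp e.surjective,
    of_linearEquiv (e.ofSubmodule' (ker f)).symm hker⟩

theorem middle_of_exact {n : ℕ} : ∀ {A B C : Type u} [AddCommGroup A] [Module R A]
    [AddCommGroup B] [Module R B] [AddCommGroup C] [Module R C] {i : A →ₗ[R] B}
    {f : B →ₗ[R] C}, Exact i f → Injective i → Surjective f →
    FinNPres R n A → FinNPres R n C → FinNPres R n B := by
  induction n with
  | zero =>
    intro A B C _ _ _ _ _ _ i f hex _ hf hA hC
    have : Module.Finite R A := hA
    have : Module.Finite R C := hC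
    exact .of_exact hex hf
  | succ n ih =>
    rintro A B C _ _ _ _ _ _ i f hex hi hf ⟨a, pA, hpA, hkA⟩ ⟨c, pC, hpC, hkC⟩
    obtain ⟨h, hh, j, π, hj, hjπ, hπ⟩ := hex.exists_horseshoe hi hf hpA hpC
    exact succ_of_linearEquiv ((LinearEquiv.funCongrLeft R R finSumFinEquiv).trans
      (LinearEquiv.sumArrowLequivProdArrow _ _ R R)) hh (ih hjπ hj hπ hkA hkC)

theorem prod {n : ℕ} (hA : FinNPres R n A) (hB : FinNPres R n B) : FinNPres R n (A × B) :=
  middle_of_exact .inl_snd inl_injective snd_surjective hA hB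

theorem right_of_exact {n : ℕ} {i : A →ₗ[R] B} {f : B →ₗ[R] C} (hex : Exact i f)
    (hi : Injective i) (hf : Surjective f) (hB : FinNPres R (n + 1) B) (hA : FinNPres R n A) :
    FinNPres R (n + 1) C := by
  obtain ⟨k, q, hq, hkq⟩ := hB
  obtain ⟨j, ρ, hj, hjρ, hρ⟩ := hex.exists_exact_ker_comp hi hq
  exact ⟨k, f ∘ₗ q, hf.comp hq, middle_of_exact hjρ hj hρ hkq hA⟩

theorem of_prod_finite_projective [Module.Finite R P] [Module.Projective R P] {n : ℕ}
    (h : FinNPres R n (A × P)) : FinNPres R n A := by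
  cases n with
  | zero =>
    have : Module.Finite R (A × P) := h
    exact .of_surjective (fst R A P) fst_surjective
  | succ n =>
    exact right_of_exact .inr_fst inr_injective fst_surjective h (of_finite_projective n P)

theorem ker_of_surjective [Module.Finite R F] [Module.Projective R F] {n : ℕ} {f : F →ₗ[R] N}
    (hf : Surjective f) (hN : FinNPres R (n + 1) N) : FinNPres R n (ker f) := by
  obtain ⟨l, g, hg, hkg⟩ := hN
  obtain ⟨e⟩ := Module.Projective.schanuel hf hg
  exact of_prod_finite_projective (of_linearEquiv e.symm (hkg.prod (of_finite_projective n F)))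

theorem left_of_exact {n : ℕ} {i : A →ₗ[R] B} {f : B →ₗ[R] C} (hex : Exact i f)
    (hi : Injective i) (hf : Surjective f) (hB : FinNPres R n B) (hC : FinNPres R (n + 1) C) :
    FinNPres R n A := by
  cases n with
  | zero =>
    have := hB.finite
    obtain ⟨k, p, hp⟩ := Module.Finite.exists_fin' R B
    obtain ⟨-, ρ, -, -, hρ⟩ := hex.exists_exact_ker_comp hi hp
    have : Module.Finite R (ker (f ∘ₗ p)) := ker_of_surjective (f := f ∘ₗ p) (hf.comp hp) hC
    exact .of_surjective ρ hρ
  | succ n =>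
    obtain ⟨k, p, hp, hkp⟩ := hB
    obtain ⟨j, ρ, hj, hjρ, hρ⟩ := hex.exists_exact_ker_comp hi hp
    exact right_of_exact hjρ hj hρ (ker_of_surjective (f := f ∘ₗ p) (hf.comp hp) hC) hkp

end FinNPres

namespace ProjDimLE

theorem of_linearEquiv : ∀ {d : ℕ} {M N : Type u} [AddCommGroup M] [Module R M]
    [AddCommGroup N] [Module R N], (M ≃ₗ[R] N) → ProjDimLE R d M → ProjDimLE R d N
  | 0, M, _, _, _, _, _, e, hM => by
    have : Module.Projective R M := hM
    exact .of_equiv e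
  | _ + 1, _, _, _, _, _, _, e, ⟨ι, f, hf, hker⟩ =>
    ⟨ι, e.toLinearMap ∘ₗ f, e.surjective.comp hf, by rwa [ker_comp_of_ker_eq_bot f e.ker]⟩

theorem of_projective : ∀ (d : ℕ) (M : Type u) [AddCommGroup M] [Module R M]
    [Module.Projective R M], ProjDimLE R d M
  | 0, _, _, _, h => h
  | d + 1, M, _, _, _ => by
    have hf := Finsupp.linearCombination_id_surjective R M
    have := Module.Projective.of_exact (exact_subtype_ker_map _) (ker _).injective_subtype hf
    exact ⟨M, _, hf, of_projective d _⟩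

theorem mono : ∀ {d d' : ℕ} {M : Type u} [AddCommGroup M] [Module R M], d ≤ d' →
    ProjDimLE R d M → ProjDimLE R d' M
  | 0, d', M, _, _, _, hM => by
    have : Module.Projective R M := hM
    exact of_projective d' M
  | _ + 1, _ + 1, _, _, _, hdd', ⟨ι, f, hf, hker⟩ =>
    ⟨ι, f, hf, mono (Nat.le_of_succ_le_succ hdd') hker⟩

theorem succ_of_linearEquiv {d : ℕ} {ι : Type u} (e : (ι →₀ R) ≃ₗ[R] F) {f : F →ₗ[R] M}
    (hf : Surjective f) (hker : ProjDimLE R d (ker f)) : ProjDimLE R (d + 1) M :=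
  ⟨ι, f ∘ₗ e.toLinearMap, hf.comp e.surjective,
    of_linearEquiv (e.ofSubmodule' (ker f)).symm hker⟩

theorem middle_of_exact {d : ℕ} : ∀ {A B C : Type u} [AddCommGroup A] [Module R A]
    [AddCommGroup B] [Module R B] [AddCommGroup C] [Module R C] {i : A →ₗ[R] B}
    {f : B →ₗ[R] C}, Exact i f → Injective i → Surjective f →
    ProjDimLE R d A → ProjDimLE R d C → ProjDimLE R d B := by
  induction d with
  | zero =>
    intro A B C _ _ _ _ _ _ i f hex hi hf hA hC
    have : Module.Projective R A := hA
    have : Module.Projective R C := hC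
    obtain ⟨e⟩ := hex.nonempty_linearEquiv_prod hi hf
    exact .of_equiv e.symm
  | succ d ih =>
    rintro A B C _ _ _ _ _ _ i f hex hi hf ⟨ι, pA, hpA, hkA⟩ ⟨κ, pC, hpC, hkC⟩
    obtain ⟨h, hh, j, π, hj, hjπ, hπ⟩ := hex.exists_horseshoe hi hf hpA hpC
    exact succ_of_linearEquiv (Finsupp.sumFinsuppLEquivProdFinsupp R) hh (ih hjπ hj hπ hkA hkC)

theorem prod {d : ℕ} (hA : ProjDimLE R d A) (hB : ProjDimLE R d B) : ProjDimLE R d (A × B) :=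
  middle_of_exact .inl_snd inl_injective snd_surjective hA hB

theorem right_of_exact {d : ℕ} {i : A →ₗ[R] B} {f : B →ₗ[R] C} (hex : Exact i f)
    (hi : Injective i) (hf : Surjective f) (hB : ProjDimLE R (d + 1) B)
    (hA : ProjDimLE R d A) : ProjDimLE R (d + 1) C := by
  obtain ⟨ι, q, hq, hkq⟩ := hB
  obtain ⟨j, ρ, hj, hjρ, hρ⟩ := hex.exists_exact_ker_comp hi hq
  exact ⟨ι, f ∘ₗ q, hf.comp hq, middle_of_exact hjρ hj hρ hkq hA⟩

theorem of_prod_projective [Module.Projective R P] {d : ℕ} (h : ProjDimLE R d (A × P)) :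
    ProjDimLE R d A := by
  cases d with
  | zero =>
    have : Module.Projective R (A × P) := h
    exact .of_exact (Exact.inl_snd (R := R) (M := A) (N := P)) inl_injective snd_surjective
  | succ d => exact right_of_exact .inr_fst inr_injective fst_surjective h (of_projective d P)

theorem ker_of_surjective [Module.Projective R F] {d : ℕ} {f : F →ₗ[R] N}
    (hf : Surjective f) (hN : ProjDimLE R (d + 1) N) : ProjDimLE R d (ker f) := by
  obtain ⟨ι, g, hg, hkg⟩ := hN
  obtain ⟨e⟩ := Module.Projective.schanuel hf hg
  exact of_prod_projective (of_linearEquiv e.symm (hkg.prod (of_projective d F)))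

theorem left_of_exact : ∀ {d : ℕ} {i : A →ₗ[R] B} {f : B →ₗ[R] C}, Exact i f → Injective i →
    Surjective f → ProjDimLE R d B → ProjDimLE R d C → ProjDimLE R d A
  | 0, _, _, hex, hi, hf, hB, hC => by
    have : Module.Projective R B := hB
    have : Module.Projective R C := hC
    exact .of_exact hex hi hf
  | d + 1, _, f, hex, hi, hf, ⟨ι, p, hp, hkp⟩, hC => by
    obtain ⟨j, ρ, hj, hjρ, hρ⟩ := hex.exists_exact_ker_comp hi hp
    have hfp := ker_of_surjective (f := f ∘ₗ p) (hf.comp hp) hC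
    exact right_of_exact hjρ hj hρ (hfp.mono d.le_succ) hkp

end ProjDimLE

theorem FinNPres.of_projDimLE : ∀ {d n : ℕ} {M : Type u} [AddCommGroup M] [Module R M],
    d ≤ n → FinNPres R n M → ProjDimLE R d M → ∀ k, FinNPres R k M
  | 0, n, M, _, _, _, hM, hpd, k => by
    have := hM.finite
    have : Module.Projective R M := hpd
    exact of_finite_projective k M
  | d + 1, n + 1, _, _, _, hdn, ⟨k₀, f, hf, hker⟩, hpd, k => by
    have hker_all := of_projDimLE (Nat.le_of_succ_le_succ hdn) hker
      (ProjDimLE.ker_of_surjective hf hpd)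
    cases k with
    | zero => exact FinNPres.finite (n := n + 1) ⟨k₀, f, hf, hker⟩
    | succ k => exact ⟨k₀, f, hf, hker_all k⟩

end

/-- If `d ≤ n`, then every finitely `n`-presented module of projective dimension at most `d`
is finitely `∞`-presented (i.e. finitely `k`-presented for every `k`); consequently, the class
`FPₙ^{≤d}(R)` is closed under kernels of epimorphisms between its members. -/
theorem fp_n_le_d_subset_fp_infty_of_le (R : Type u) [Ring R] (n d : ℕ) (hdn : d ≤ n) :
    (∀ (M : Type u) [AddCommGroup M] [Module R M],
        FinNPres R n M → ProjDimLE R d M → ∀ k : ℕ, FinNPres R k M) ∧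
    (∀ (M N : Type u) [AddCommGroup M] [Module R M] [AddCommGroup N] [Module R N]
        (f : M →ₗ[R] N), Function.Surjective f →
        FinNPres R n M → ProjDimLE R d M → FinNPres R n N → ProjDimLE R d N →
        FinNPres R n (LinearMap.ker f) ∧ ProjDimLE R d (LinearMap.ker f)) := by
  refine ⟨fun M _ _ ↦ FinNPres.of_projDimLE hdn, fun M N _ _ _ _ f hf hM hpdM hN hpdN ↦ ?_⟩
  have hex := exact_subtype_ker_map f
  have hinj := (ker f).injective_subtype
  exact ⟨.left_of_exact hex hinj hf hM (FinNPres.of_projDimLE hdn hN hpdN (n + 1)),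
    .left_of_exact hex hinj hf hpdM hpdN⟩
end

section
/- Let P ↣ N ↠ M be a short exact sequence of R-modules where N is (n,d)-coherent. If P is finitely (n-1)-presented with projective dimension at most d-1, then both M and P are (n,d)-coherent. -/
universe u

/-- Projective dimension at most `d` for `d : ℕ∞`; `d = ⊤` imposes no condition. -/
def ProjDimLE' (R : Type u) [Ring R] (d : ℕ∞) (M : Type u) [AddCommGroup M] [Module R M] : Prop :=
  ∀ k : ℕ, (k : ℕ∞) = d → ProjDimLE R k M

/-- `M` is an `(n,d)`-coherent `R`-module: it is finitely `n`-presented and every finitely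
`(n-1)`-presented submodule of `M` of projective dimension at most `d-1` is finitely
`n`-presented. -/
def NDCohMod (R : Type u) [Ring R] (n : ℕ) (d : ℕ∞) (M : Type u)
    [AddCommGroup M] [Module R M] : Prop :=
  FinNPres R n M ∧ ∀ (N : Submodule R M), FinNPres R (n - 1) N →
    ProjDimLE' R (d - 1) N → FinNPres R n N

/-!
`P` embeds through `f` in `N` as a finitely `(n-1)`-presented submodule of projective dimension
at most `d-1`, and so does each of its own such submodules; the coherence of `N` makes all of
them finitely `n`-presented.

For a submodule `Q` of `M`, the preimage `g⁻¹(Q)` is an extension of `Q` by `P`. By the horseshoe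
lemma, being finitely `k`-presented and having projective dimension at most `k` both pass to
extensions, so `g⁻¹(Q)` is finitely `(n-1)`-presented of projective dimension at most `d-1`,
hence finitely `n`-presented by coherence of `N`. Finally, if `F → g⁻¹(Q)` is a finite free
presentation, the kernel of the composite `F → Q` is an extension of `P` by the kernel of the
first map, so `Q` (and likewise `M`) is finitely `n`-presented.
-/

open Function LinearMap

structure IsShortExact {R A B C : Type*} [Ring R] [AddCommGroup A] [Module R A]
    [AddCommGroup B] [Module R B] [AddCommGroup C] [Module R C]
    (f : A →ₗ[R] B) (g : B →ₗ[R] C) : Prop where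
  injective : Injective f
  surjective : Surjective g
  exact : Exact f g

namespace IsShortExact

variable {R : Type*} [Ring R] {P N M : Type*} [AddCommGroup P] [Module R P]
  [AddCommGroup N] [Module R N] [AddCommGroup M] [Module R M]
  {f : P →ₗ[R] N} {g : N →ₗ[R] M}

theorem exists_ker_restrict {A₁ A₂ A₃ : Type*} [AddCommGroup A₁] [Module R A₁]
    [AddCommGroup A₂] [Module R A₂] [AddCommGroup A₃] [Module R A₃]
    {i : A₁ →ₗ[R] A₂} {p : A₂ →ₗ[R] A₃} (hip : IsShortExact i p)
    (hf : Injective f) (hfg : Exact f g)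
    (α : A₁ →ₗ[R] P) (β : A₂ →ₗ[R] N) (γ : A₃ →ₗ[R] M) (hα : Surjective α)
    (h₁ : β ∘ₗ i = f ∘ₗ α) (h₂ : γ ∘ₗ p = g ∘ₗ β) :
    ∃ (i' : ker α →ₗ[R] ker β) (p' : ker β →ₗ[R] ker γ), IsShortExact i' p' := by
  have hi : ∀ x, β (i x) = f (α x) := LinearMap.congr_fun h₁
  have hp : ∀ y, γ (p y) = g (β y) := LinearMap.congr_fun h₂
  refine ⟨i.restrict fun x (hx : α x = 0) ↦ by simp [mem_ker, hi, hx],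
    p.restrict fun y (hy : β y = 0) ↦ by simp [mem_ker, hp, hy], ?_, ?_, ?_⟩
  · exact fun x y hxy ↦ Subtype.ext (hip.injective (congr_arg Subtype.val hxy))
  · rintro ⟨z, hz : γ z = 0⟩
    obtain ⟨y, rfl⟩ := hip.surjective z
    obtain ⟨x, hx⟩ := (hfg (β y)).1 (by rw [← hp, hz])
    obtain ⟨w, rfl⟩ := hα x
    refine ⟨⟨y - i w, ?_⟩, Subtype.ext ?_⟩
    · simp [mem_ker, hi, hx]
    · change p (y - i w) = p y
      simp [hip.exact.apply_apply_eq_zero]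
  · rintro ⟨y, hy : β y = 0⟩
    refine ⟨fun hpy ↦ ?_, ?_⟩
    · obtain ⟨w, rfl⟩ := (hip.exact y).1 (congr_arg Subtype.val hpy)
      have hw : α w = 0 := hf (by rw [← hi, hy, map_zero])
      exact ⟨⟨w, hw⟩, rfl⟩
    · rintro ⟨⟨w, _⟩, hw⟩
      rw [← hw]
      exact Subtype.ext (hip.exact.apply_apply_eq_zero w)

theorem exists_horseshoe (h : IsShortExact f g) {F₁ F₂ : Type*} [AddCommGroup F₁]
    [Module R F₁] [AddCommGroup F₂] [Module R F₂] [Module.Projective R F₂]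
    (a : F₁ →ₗ[R] P) (ha : Surjective a) (c : F₂ →ₗ[R] M) (hc : Surjective c) :
    ∃ b : F₁ × F₂ →ₗ[R] N, Surjective b ∧
      ∃ (f' : ker a →ₗ[R] ker b) (g' : ker b →ₗ[R] ker c), IsShortExact f' g' := by
  obtain ⟨s, hs⟩ := Module.projective_lifting_property g c h.surjective
  have hgs : ∀ y, g (s y) = c y := LinearMap.congr_fun hs
  refine ⟨coprod (f ∘ₗ a) s, fun n ↦ ?_, ?_⟩
  · obtain ⟨y, hy⟩ := hc (g n)
    obtain ⟨p, hp⟩ := (h.exact (n - s y)).1 (by simp [hgs, hy])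
    obtain ⟨x, rfl⟩ := ha p
    exact ⟨(x, y), by simp [hp]⟩
  · exact exists_ker_restrict ⟨inl_injective, snd_surjective, .inl_snd⟩ h.injective h.exact
      a _ c ha (by ext; simp) (by ext <;> simp [hgs, h.exact.apply_apply_eq_zero])

theorem exists_comap (h : IsShortExact f g) (Q : Submodule R M) :
    ∃ (f' : P →ₗ[R] Q.comap g) (g' : Q.comap g →ₗ[R] Q), IsShortExact f' g' := by
  have hgf : ∀ x, g (f x) = 0 := h.exact.apply_apply_eq_zero
  refine ⟨f.codRestrict _ fun x ↦ by simp [hgf], g.restrict fun _ hy ↦ hy, ?_, ?_, ?_⟩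
  · exact fun x y hxy ↦ h.injective (congr_arg Subtype.val hxy)
  · rintro ⟨z, hz⟩
    obtain ⟨y, rfl⟩ := h.surjective z
    exact ⟨⟨y, hz⟩, rfl⟩
  · rintro ⟨y, hy⟩
    refine ⟨fun hgy ↦ ?_, ?_⟩
    · obtain ⟨x, rfl⟩ := (h.exact y).1 (congr_arg Subtype.val hgy)
      exact ⟨x, rfl⟩
    · rintro ⟨x, hx⟩
      rw [← hx]
      exact Subtype.ext (hgf x)

end IsShortExact

theorem isShortExact_ker_comp {R F N M : Type*} [Ring R] [AddCommGroup F] [Module R F]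
    [AddCommGroup N] [Module R N] [AddCommGroup M] [Module R M]
    (b : F →ₗ[R] N) (hb : Surjective b) (g : N →ₗ[R] M) :
    IsShortExact (Submodule.inclusion (ker_le_ker_comp b g))
      (b.restrict (q := ker g) fun _ hx ↦ hx) := by
  refine ⟨Submodule.inclusion_injective _, ?_, ?_⟩
  · rintro ⟨y, hy : g y = 0⟩
    obtain ⟨x, rfl⟩ := hb y
    exact ⟨⟨x, hy⟩, rfl⟩
  · rintro ⟨x, hx⟩
    refine ⟨fun hbx ↦ ⟨⟨x, congr_arg Subtype.val hbx⟩, rfl⟩, ?_⟩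
    rintro ⟨⟨x, hbx⟩, hx'⟩
    rw [← hx']
    exact Subtype.ext hbx

variable {R : Type u} [Ring R]

theorem FinNPres.of_equiv : ∀ {n : ℕ} {M M' : Type u} [AddCommGroup M] [Module R M]
    [AddCommGroup M'] [Module R M'], (M ≃ₗ[R] M') → FinNPres R n M → FinNPres R n M'
  | 0, _, _, _, _, _, _, e, h => by
    have : Module.Finite R _ := h
    exact Module.Finite.equiv e
  | _ + 1, _, _, _, _, _, _, e, ⟨k, a, ha, hk⟩ =>
    ⟨k, e.toLinearMap ∘ₗ a, e.surjective.comp ha,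
      by rwa [ker_comp, LinearEquiv.ker, Submodule.comap_bot]⟩

theorem ProjDimLE.of_equiv : ∀ {d : ℕ} {M M' : Type u} [AddCommGroup M] [Module R M]
    [AddCommGroup M'] [Module R M'], (M ≃ₗ[R] M') → ProjDimLE R d M → ProjDimLE R d M'
  | 0, _, _, _, _, _, _, e, h => by
    have : Module.Projective R _ := h
    exact Module.Projective.of_equiv e
  | _ + 1, _, _, _, _, _, _, e, ⟨ι, a, ha, hk⟩ =>
    ⟨ι, e.toLinearMap ∘ₗ a, e.surjective.comp ha,
      by rwa [ker_comp, LinearEquiv.ker, Submodule.comap_bot]⟩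

section

variable {F M : Type u} [AddCommGroup F] [Module R F] [AddCommGroup M] [Module R M]

theorem FinNPres.succ_of_surjective {n k : ℕ} (e : F ≃ₗ[R] (Fin k → R)) (b : F →ₗ[R] M)
    (hb : Surjective b) (h : FinNPres R n (ker b)) : FinNPres R (n + 1) M :=
  ⟨k, b ∘ₗ e.symm.toLinearMap, hb.comp e.symm.surjective,
    h.of_equiv (e.symm.ofSubmodule' (ker b)).symm⟩

theorem ProjDimLE.succ_of_surjective {d : ℕ} {ι : Type u} (e : F ≃ₗ[R] (ι →₀ R))
    (b : F →ₗ[R] M) (hb : Surjective b) (h : ProjDimLE R d (ker b)) : ProjDimLE R (d + 1) M :=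
  ⟨ι, b ∘ₗ e.symm.toLinearMap, hb.comp e.symm.surjective,
    h.of_equiv (e.symm.ofSubmodule' (ker b)).symm⟩

end

theorem FinNPres.of_isShortExact : ∀ {n : ℕ} {P N M : Type u} [AddCommGroup P] [Module R P]
    [AddCommGroup N] [Module R N] [AddCommGroup M] [Module R M]
    {f : P →ₗ[R] N} {g : N →ₗ[R] M},
    IsShortExact f g → FinNPres R n P → FinNPres R n M → FinNPres R n N
  | 0, _, _, _, _, _, _, _, _, _, _, _, h, hP, hM => by
    have : Module.Finite R _ := hP
    have : Module.Finite R _ := hM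
    exact Module.Finite.of_exact h.exact h.surjective
  | _ + 1, _, _, _, _, _, _, _, _, _, _, _, h, ⟨j, a, ha, hka⟩, ⟨k, c, hc, hkc⟩ => by
    obtain ⟨b, hb, f', g', h'⟩ := h.exists_horseshoe a ha c hc
    exact .succ_of_surjective ((LinearEquiv.sumArrowLequivProdArrow _ _ R R).symm.trans
      (LinearEquiv.funCongrLeft R R finSumFinEquiv.symm)) b hb (of_isShortExact h' hka hkc)

theorem ProjDimLE.of_isShortExact : ∀ {d : ℕ} {P N M : Type u} [AddCommGroup P] [Module R P]
    [AddCommGroup N] [Module R N] [AddCommGroup M] [Module R M]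
    {f : P →ₗ[R] N} {g : N →ₗ[R] M},
    IsShortExact f g → ProjDimLE R d P → ProjDimLE R d M → ProjDimLE R d N
  | 0, _, _, _, _, _, _, _, _, _, _, _, h, hP, hM => by
    have : Module.Projective R _ := hP
    have : Module.Projective R _ := hM
    obtain ⟨s, hs⟩ := Module.projective_lifting_property _ LinearMap.id h.surjective
    exact Module.Projective.of_equiv (h.exact.splitSurjectiveEquiv h.injective ⟨s, hs⟩).1.symm
  | _ + 1, _, _, _, _, _, _, _, _, _, _, _, h, ⟨ι, a, ha, hka⟩, ⟨κ, c, hc, hkc⟩ => by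
    obtain ⟨b, hb, f', g', h'⟩ := h.exists_horseshoe a ha c hc
    exact .succ_of_surjective (Finsupp.sumFinsuppLEquivProdFinsupp R).symm b hb
      (of_isShortExact h' hka hkc)

section

variable {P N M : Type u} [AddCommGroup P] [Module R P] [AddCommGroup N] [Module R N]
  [AddCommGroup M] [Module R M] {f : P →ₗ[R] N} {g : N →ₗ[R] M}

theorem FinNPres.right_of_isShortExact {n : ℕ} (h : IsShortExact f g)
    (hP : FinNPres R (n - 1) P) (hN : FinNPres R n N) : FinNPres R n M := by
  cases n with
  | zero =>
    have : Module.Finite R N := hN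
    exact Module.Finite.of_surjective g h.surjective
  | succ n =>
    obtain ⟨k, b, hb, hkb⟩ := hN
    have eP : P ≃ₗ[R] ker g := (LinearEquiv.ofInjective f h.injective).trans
      (LinearEquiv.ofEq _ _ h.exact.linearMap_ker_eq.symm)
    exact ⟨k, g ∘ₗ b, h.surjective.comp hb,
      .of_isShortExact (isShortExact_ker_comp b hb g) hkb (hP.of_equiv eP)⟩

theorem NDCohMod.finNPres_of_injective {n : ℕ} {d : ℕ∞} (hN : NDCohMod R n d N)
    (hf : Injective f) (hP₁ : FinNPres R (n - 1) P) (hP₂ : ProjDimLE' R (d - 1) P) :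
    FinNPres R n P :=
  let e := LinearEquiv.ofInjective f hf
  (hN.2 _ (hP₁.of_equiv e) fun k hk ↦ (hP₂ k hk).of_equiv e).of_equiv e.symm

theorem NDCohMod.of_injective {n : ℕ} {d : ℕ∞} (hN : NDCohMod R n d N)
    (hf : Injective f) (hP₁ : FinNPres R (n - 1) P) (hP₂ : ProjDimLE' R (d - 1) P) :
    NDCohMod R n d P :=
  ⟨hN.finNPres_of_injective hf hP₁ hP₂, fun Q hQ₁ hQ₂ ↦
    hN.finNPres_of_injective (f := f ∘ₗ Q.subtype) (hf.comp Subtype.val_injective)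
      hQ₁ hQ₂⟩

theorem NDCohMod.right_of_isShortExact {n : ℕ} {d : ℕ∞} (hN : NDCohMod R n d N)
    (h : IsShortExact f g) (hP₁ : FinNPres R (n - 1) P) (hP₂ : ProjDimLE' R (d - 1) P) :
    NDCohMod R n d M := by
  refine ⟨.right_of_isShortExact h hP₁ hN.1, fun Q hQ₁ hQ₂ ↦ ?_⟩
  obtain ⟨f', g', h'⟩ := h.exists_comap Q
  have hQ' : FinNPres R n (Q.comap g) := hN.2 _ (.of_isShortExact h' hP₁ hQ₁)
    fun k hk ↦ .of_isShortExact h' (hP₂ k hk) (hQ₂ k hk)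
  exact .right_of_isShortExact h' hP₁ hQ'

end

theorem ndCohMod_of_ses_general (R : Type u) [Ring R] (n : ℕ) (d : ℕ∞)
    (P N M : Type u) [AddCommGroup P] [Module R P] [AddCommGroup N] [Module R N]
    [AddCommGroup M] [Module R M] (f : P →ₗ[R] N) (g : N →ₗ[R] M)
    (hf : Function.Injective f) (hg : Function.Surjective g)
    (hex : LinearMap.range f = LinearMap.ker g)
    (hN : NDCohMod R n d N) (hP₁ : FinNPres R (n - 1) P) (hP₂ : ProjDimLE' R (d - 1) P) :
    NDCohMod R n d M ∧ NDCohMod R n d P :=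
  have h : IsShortExact f g := ⟨hf, hg, LinearMap.exact_iff.2 hex.symm⟩
  ⟨hN.right_of_isShortExact h hP₁ hP₂, hN.of_injective hf hP₁ hP₂⟩

/-- Let `P ↣ N ↠ M` be a short exact sequence of `R`-modules with `N` an `(n,d)`-coherent
module.  If `P` is finitely `(n-1)`-presented of projective dimension at most `d-1`, then
both `M` and `P` are `(n,d)`-coherent. -/
theorem ndCohMod_of_ses (R : Type u) [Ring R] (n : ℕ) (hn : 1 ≤ n) (d : ℕ∞) (hd : 1 ≤ d)
    (P N M : Type u) [AddCommGroup P] [Module R P] [AddCommGroup N] [Module R N]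
    [AddCommGroup M] [Module R M] (f : P →ₗ[R] N) (g : N →ₗ[R] M)
    (hf : Function.Injective f) (hg : Function.Surjective g)
    (hex : LinearMap.range f = LinearMap.ker g)
    (hN : NDCohMod R n d N) (hP₁ : FinNPres R (n - 1) P) (hP₂ : ProjDimLE' R (d - 1) P) :
    NDCohMod R n d M ∧ NDCohMod R n d P :=
  ndCohMod_of_ses_general R n d P N M f g hf hg hex hN hP₁ hP₂
end

section
/- Let R be a commutative ring, n ≥ 2, d ∈ ℕ* ∪ {∞}, and M an R-module. If for every prime ideal 𝔭 of R the localization M_𝔭 is FP_n^{≤d}-injective over R_𝔭, then M is FP_n^{≤d}-injective over R. -/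
universe u

/-- `Ext¹_R(M, N) = 0`, expressed by the splitting of all extensions of `M` by `N`. -/
def Ext1Zero (R : Type u) [Ring R] (M N : Type u) [AddCommGroup M] [Module R M]
    [AddCommGroup N] [Module R N] : Prop :=
  ∀ (X : Type u) [AddCommGroup X] [Module R X] (i : N →ₗ[R] X) (p : X →ₗ[R] M),
    Function.Injective i → Function.Surjective p → LinearMap.range i = LinearMap.ker p →
    ∃ r : X →ₗ[R] N, r ∘ₗ i = LinearMap.id

/-- `N` is `FPₙ^{≤d}`-injective: `Ext¹_R(K, N) = 0` for every finitely `n`-presented `K`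
of projective dimension at most `d`. -/
def FPdInj (R : Type u) [Ring R] (n : ℕ) (d : ℕ∞) (N : Type u)
    [AddCommGroup N] [Module R N] : Prop :=
  ∀ (K : Type u) [AddCommGroup K] [Module R K],
    FinNPres R n K → ProjDimLE' R d K → Ext1Zero R K N

/-- `M` is `FPₙ^{≤d}`-projective: `Ext¹_R(M, N) = 0` for every `FPₙ^{≤d}`-injective `N`. -/
def FPdProj (R : Type u) [Ring R] (n : ℕ) (d : ℕ∞) (M : Type u)
    [AddCommGroup M] [Module R M] : Prop :=
  ∀ (N : Type u) [AddCommGroup N] [Module R N], FPdInj R n d N → Ext1Zero R M N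

/-!
A finitely `n`-presented module with `n ≥ 1` is finitely presented, and both finite
`n`-presentation and projective dimension `≤ d` survive localization. Given an extension
`0 → M → X → K → 0` with `K` such a module, its localization at each maximal ideal `𝔪` splits
by hypothesis, so `X_𝔪 → K_𝔪` has a section. Since `K` is finitely presented, `Hom_R(K, -)`
commutes with localization, so `Hom_R(K, X) → Hom_R(K, K)` is surjective because it is so
locally, and `X → K` has a global section.
-/

variable {R : Type u}

section Splitting

variable [Ring R] {K N : Type u} [AddCommGroup K] [Module R K] [AddCommGroup N] [Module R N]

theorem ext1Zero_iff_exists_section : Ext1Zero R K N ↔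
    ∀ (X : Type u) [AddCommGroup X] [Module R X] (i : N →ₗ[R] X) (p : X →ₗ[R] K),
      Function.Injective i → Function.Surjective p → Function.Exact i p →
      ∃ s : K →ₗ[R] X, p ∘ₗ s = LinearMap.id := by
  refine forall_congr' fun X ↦ forall_congr' fun _ ↦ forall_congr' fun _ ↦ forall_congr' fun i ↦
    forall_congr' fun p ↦ forall_congr' fun hi ↦ forall_congr' fun hp ↦ ?_
  rw [eq_comm, ← LinearMap.exact_iff]
  exact imp_congr_right fun hex ↦ ((hex.split_tfae hi hp).out 1 0)

end Splitting

section FinitePresentation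

variable [Ring R]

theorem FinNPres.finite_s11 : ∀ {n : ℕ} {M : Type u} [AddCommGroup M] [Module R M],
    FinNPres R n M → Module.Finite R M
  | 0, _, _, _, hM => hM
  | _ + 1, _, _, _, ⟨_, f, hf, _⟩ => Module.Finite.of_surjective f hf

theorem FinNPres.finitePresentation {n : ℕ} (hn : 1 ≤ n) {M : Type u} [AddCommGroup M]
    [Module R M] (hM : FinNPres R n M) : Module.FinitePresentation R M := by
  obtain ⟨m, rfl⟩ : ∃ m, n = m + 1 := ⟨n - 1, by omega⟩
  obtain ⟨k, f, hf, hker⟩ := hM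
  have : Module.Finite R (LinearMap.ker f) := hker.finite_s11
  exact Module.finitePresentation_of_surjective f hf (Module.Finite.iff_fg.mp inferInstance)

end FinitePresentation

section Localization

variable [CommRing R] (S : Submonoid R) (A : Type u) [CommRing A] [Algebra R A]
  [IsLocalization S A]

theorem ker_mapExtendScalars {M M' N N' : Type u} [AddCommGroup M] [Module R M]
    [AddCommGroup M'] [Module R M'] [Module A M'] [IsScalarTower R A M']
    [AddCommGroup N] [Module R N] [AddCommGroup N'] [Module R N'] [Module A N']
    [IsScalarTower R A N'] (f : M →ₗ[R] M') [IsLocalizedModule S f] (g : N →ₗ[R] N')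
    [IsLocalizedModule S g] (h : M →ₗ[R] N) :
    LinearMap.ker (IsLocalizedModule.mapExtendScalars S f g A h) =
      (LinearMap.ker h).localized' A S f :=
  (LinearMap.localized'_ker_eq_ker_localizedMap A S f g h).symm

theorem FinNPres.of_isLocalizedModule : ∀ {n : ℕ} {K KS : Type u} [AddCommGroup K] [Module R K]
    [AddCommGroup KS] [Module R KS] [Module A KS] [IsScalarTower R A KS]
    (φ : K →ₗ[R] KS) [IsLocalizedModule S φ], FinNPres R n K → FinNPres A n KS
  | 0, _, _, _, _, _, _, _, _, φ, _, hK => by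
    have : Module.Finite R _ := hK
    exact Module.Finite.equiv (IsLocalizedModule.isBaseChange S A φ).equiv
  | _ + 1, _, _, _, _, _, _, _, _, φ, _, ⟨k, f, hf, hker⟩ => by
    let ψ : (Fin k → R) →ₗ[R] (Fin k → A) :=
      .pi fun i ↦ Algebra.linearMap R A ∘ₗ .proj i
    refine ⟨k, IsLocalizedModule.mapExtendScalars S ψ φ A f,
      IsLocalizedModule.map_surjective S ψ φ f hf, ?_⟩
    rw [ker_mapExtendScalars]
    exact of_isLocalizedModule ((LinearMap.ker f).toLocalized' A S ψ) hker

theorem ProjDimLE.of_isLocalizedModule : ∀ {d : ℕ} {K KS : Type u} [AddCommGroup K] [Module R K]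
    [AddCommGroup KS] [Module R KS] [Module A KS] [IsScalarTower R A KS]
    (φ : K →ₗ[R] KS) [IsLocalizedModule S φ], ProjDimLE R d K → ProjDimLE A d KS
  | 0, _, _, _, _, _, _, _, _, φ, _, hK => by
    have : Module.Projective R _ := hK
    exact Module.projective_of_isLocalizedModule S φ
  | _ + 1, _, _, _, _, _, _, _, _, φ, _, ⟨ι, f, hf, hker⟩ => by
    let ψ : (ι →₀ R) →ₗ[R] (ι →₀ A) := Finsupp.mapRange.linearMap (Algebra.linearMap R A)
    refine ⟨ι, IsLocalizedModule.mapExtendScalars S ψ φ A f,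
      IsLocalizedModule.map_surjective S ψ φ f hf, ?_⟩
    rw [ker_mapExtendScalars]
    exact of_isLocalizedModule ((LinearMap.ker f).toLocalized' A S ψ) hker

theorem ProjDimLE'.of_isLocalizedModule {d : ℕ∞} {K KS : Type u} [AddCommGroup K] [Module R K]
    [AddCommGroup KS] [Module R KS] [Module A KS] [IsScalarTower R A KS]
    (φ : K →ₗ[R] KS) [IsLocalizedModule S φ] (hK : ProjDimLE' R d K) : ProjDimLE' A d KS :=
  fun k hk ↦ (hK k hk).of_isLocalizedModule S A φ

end Localization

theorem Ext1Zero.of_localization_maximal [CommRing R] {K N : Type u} [AddCommGroup K]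
    [Module R K] [Module.FinitePresentation R K] [AddCommGroup N] [Module R N]
    (H : ∀ (I : Ideal R) [I.IsMaximal], Ext1Zero (Localization.AtPrime I)
      (LocalizedModule I.primeCompl K) (LocalizedModule I.primeCompl N)) :
    Ext1Zero R K N := by
  rw [ext1Zero_iff_exists_section]
  intro X _ _ i p hi hp hex
  refine p.split_surjective_of_localization_maximal fun I _ ↦ ?_
  exact ext1Zero_iff_exists_section.mp (H I) _ _ _ (LocalizedModule.map_injective _ i hi)
    (LocalizedModule.map_surjective _ p hp) (LocalizedModule.map_exact _ i p hex)

theorem fpdInj_of_localizations_general (R : Type u) [CommRing R] (n : ℕ) (hn : 2 ≤ n)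
    (d : ℕ∞) (M : Type u) [AddCommGroup M] [Module R M]
    (h : ∀ (𝔭 : Ideal R) [𝔭.IsPrime],
      FPdInj (Localization.AtPrime 𝔭) n d (LocalizedModule 𝔭.primeCompl M)) :
    FPdInj R n d M := by
  intro K _ _ hK hKd
  have : Module.FinitePresentation R K := hK.finitePresentation (by omega)
  refine Ext1Zero.of_localization_maximal fun I _ ↦ h I _ ?_ ?_
  · exact hK.of_isLocalizedModule I.primeCompl _ (LocalizedModule.mkLinearMap _ K)
  · exact hKd.of_isLocalizedModule I.primeCompl _ (LocalizedModule.mkLinearMap _ K)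

/-- Local-to-global for `FPₙ^{≤d}`-injectivity: if `M` localized at every prime ideal `𝔭`
is `FPₙ^{≤d}`-injective over `R_𝔭`, then `M` is `FPₙ^{≤d}`-injective over `R`. -/
theorem fpdInj_of_localizations (R : Type u) [CommRing R] (n : ℕ) (hn : 2 ≤ n)
    (d : ℕ∞) (hd : 1 ≤ d) (M : Type u) [AddCommGroup M] [Module R M]
    (h : ∀ (𝔭 : Ideal R) [𝔭.IsPrime],
      FPdInj (Localization.AtPrime 𝔭) n d (LocalizedModule 𝔭.primeCompl M)) :
    FPdInj R n d M :=
  fpdInj_of_localizations_general R n hn d M h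
end

section
/- Every FP_n^{≤d}-projective R-module has projective dimension at most d. -/
universe u

/-!
The modules testing `FPₙ^{≤d}`-injectivity all lie in the class `𝒫_d` of modules of projective
dimension `≤ d`, so an `FPₙ^{≤d}`-projective module `M` has `Ext¹(M, N) = 0` for every `N` in the
right `Ext¹`-orthogonal `𝒫_d^⊥`; such an `M` lies in `𝒫_d`, by induction on `d`. For `d = 0`,
`M` splits off a free module. For the step, embed `N ∈ 𝒫_d^⊥` into an injective module `E`:
dimension shifting gives `E ⧸ N ∈ 𝒫_{d+1}^⊥`, hence `Ext¹(M, E ⧸ N) = 0`, and shifting once more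
turns this into `Ext¹(Ω M, N) = 0` for the first syzygy `Ω M`, which therefore lies in `𝒫_d`.
-/

open LinearMap Function

section

variable {R : Type u} [Ring R] {A B C : Type u} [AddCommGroup A] [Module R A]
  [AddCommGroup B] [Module R B] [AddCommGroup C] [Module R C]

theorem LinearMap.exists_comp_eq_of_ker_le {π : A →ₗ[R] B} (hπ : Surjective π) {θ : A →ₗ[R] C}
    (h : ker π ≤ ker θ) : ∃ t : B →ₗ[R] C, t ∘ₗ π = θ :=
  ⟨(ker π).liftQ θ h ∘ₗ (π.quotKerEquivOfSurjective hπ).symm.toLinearMap, by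
    ext a
    simp⟩

theorem LinearMap.exists_comp_eq_of_range_le {i : A →ₗ[R] B} (hi : Injective i) {f : C →ₗ[R] B}
    (h : range f ≤ range i) : ∃ g : C →ₗ[R] A, i ∘ₗ g = f :=
  ⟨(LinearEquiv.ofInjective i hi).symm.toLinearMap ∘ₗ f.codRestrict _ (fun c => h ⟨c, rfl⟩), by
    ext c
    simp⟩

end

namespace Ext1Zero

variable {R : Type u} [Ring R]

theorem of_forall_exists_section {M N : Type u} [AddCommGroup M] [Module R M] [AddCommGroup N]
    [Module R N] (H : ∀ (X : Type u) [AddCommGroup X] [Module R X] (i : N →ₗ[R] X)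
      (p : X →ₗ[R] M), Injective i → Surjective p → range i = ker p →
        ∃ s : M →ₗ[R] X, p ∘ₗ s = LinearMap.id) :
    Ext1Zero R M N := by
  intro X _ _ i p hi hp hex
  have hsplit := (exact_iff.mpr hex.symm).split_tfae hi hp
  exact (hsplit.out 0 1).mp (H X i p hi hp hex)

theorem exists_section {M N X : Type u} [AddCommGroup M] [Module R M] [AddCommGroup N]
    [Module R N] [AddCommGroup X] [Module R X] (hM : Ext1Zero R M N) {i : N →ₗ[R] X}
    {p : X →ₗ[R] M} (hi : Injective i) (hp : Surjective p) (hex : range i = ker p) :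
    ∃ s : M →ₗ[R] X, p ∘ₗ s = LinearMap.id := by
  have hsplit := (exact_iff.mpr hex.symm).split_tfae hi hp
  exact (hsplit.out 0 1).mpr (hM X i p hi hp hex)

theorem of_projective (K N : Type u) [AddCommGroup K] [Module R K] [Module.Projective R K]
    [AddCommGroup N] [Module R N] : Ext1Zero R K N :=
  of_forall_exists_section fun _ _ _ _ p _ hp _ =>
    Module.projective_lifting_property p LinearMap.id hp

variable {K' P K N E C : Type u} [AddCommGroup K'] [Module R K'] [AddCommGroup P] [Module R P]
  [AddCommGroup K] [Module R K] [AddCommGroup N] [Module R N] [AddCommGroup E] [Module R E]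
  [AddCommGroup C] [Module R C] {ι : K' →ₗ[R] P} {π : P →ₗ[R] K} {α : N →ₗ[R] E} {β : E →ₗ[R] C}

theorem exists_extension (hι : Injective ι) (hπ : Surjective π) (hex : Exact ι π)
    (hC : Ext1Zero R K C) (h : K' →ₗ[R] C) : ∃ H : P →ₗ[R] C, H ∘ₗ ι = h := by
  -- `(C × P) ⧸ S` is the pushout of `ι` along `h`, an extension of `K` by `C`
  let S := range (h.prod (-ι))
  let inC := S.mkQ ∘ₗ inl R C P
  let inP := S.mkQ ∘ₗ inr R C P
  have hle : S ≤ ker (π ∘ₗ snd R C P) := by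
    rintro _ ⟨k, rfl⟩
    simp [hex.apply_apply_eq_zero]
  let q := S.liftQ (π ∘ₗ snd R C P) hle
  have hglue : inP ∘ₗ ι = inC ∘ₗ h := by
    ext k
    simpa [inP, inC, Submodule.Quotient.eq] using ⟨-k, by simp⟩
  have hinC : Injective inC := by
    rw [← ker_eq_bot, eq_bot_iff]
    rintro c hc
    obtain ⟨k, hk⟩ : ((c, 0) : C × P) ∈ S := (Submodule.Quotient.mk_eq_zero S).mp hc
    obtain rfl : k = 0 := hι (by simpa using congrArg Prod.snd hk)
    simpa [eq_comm] using congrArg Prod.fst hk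
  have hq : Surjective q := fun k => by
    obtain ⟨x, rfl⟩ := hπ k
    exact ⟨S.mkQ (0, x), by simp [q]⟩
  have hexq : range inC = ker q := by
    refine le_antisymm (by rintro _ ⟨c, rfl⟩; simp [q, inC]) fun w hw => ?_
    obtain ⟨⟨c, y⟩, rfl⟩ := S.mkQ_surjective w
    obtain ⟨x, rfl⟩ := (hex y).mp (by simpa [q] using hw)
    refine ⟨c + h x, ?_⟩
    simpa [inC, Submodule.Quotient.eq] using ⟨x, by simp⟩
  obtain ⟨r, hr⟩ := hC _ inC q hinC hq hexq
  refine ⟨r ∘ₗ inP, ?_⟩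
  rw [LinearMap.comp_assoc, hglue, ← LinearMap.comp_assoc, hr, LinearMap.id_comp]

theorem of_forall_exists_extension [Module.Projective R P] (hπ : Surjective π) (hex : Exact ι π)
    (H : ∀ h : K' →ₗ[R] C, ∃ H : P →ₗ[R] C, H ∘ₗ ι = h) : Ext1Zero R K C := by
  refine of_forall_exists_section fun X _ _ i p hi hp hip => ?_
  obtain ⟨g, hg⟩ := Module.projective_lifting_property p π hp
  have hpg : ∀ x, p (g x) = π x := LinearMap.congr_fun hg
  have hgι : range (g ∘ₗ ι) ≤ range i := by
    rintro _ ⟨k, rfl⟩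
    simp [hip, hpg, hex.apply_apply_eq_zero]
  obtain ⟨h, hh⟩ := exists_comp_eq_of_range_le hi hgι
  obtain ⟨G, hG⟩ := H h
  have hle : ker π ≤ ker (g - i ∘ₗ G) := by
    intro x hx
    obtain ⟨k, rfl⟩ := (hex x).mp hx
    have hGι : G (ι k) = h k := LinearMap.congr_fun hG k
    have hgι : i (h k) = g (ι k) := LinearMap.congr_fun hh k
    simp [hGι, hgι]
  obtain ⟨t, ht⟩ := exists_comp_eq_of_ker_le hπ hle
  refine ⟨t, (cancel_right hπ).mp ?_⟩
  have hpi : p ∘ₗ i = 0 := by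
    ext n
    simp [← mem_ker, ← hip]
  rw [LinearMap.comp_assoc, ht, comp_sub, ← LinearMap.comp_assoc, hpi, hg]
  simp

theorem exists_lift (hα : Injective α) (hβ : Surjective β) (hex : Exact α β)
    (hN : Ext1Zero R K N) (h : K →ₗ[R] C) : ∃ H : K →ₗ[R] E, β ∘ₗ H = h := by
  -- `Y` is the pullback of `β` along `h`, an extension of `K` by `N`
  let Y := ker (β ∘ₗ fst R E K - h ∘ₗ snd R E K)
  let j : N →ₗ[R] Y := (inl R E K ∘ₗ α).codRestrict Y fun n => by
    simp [Y, hex.apply_apply_eq_zero]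
  let q : Y →ₗ[R] K := snd R E K ∘ₗ Y.subtype
  have hj : Injective j := fun a b hab => hα (congrArg (fun y : Y => y.1.1) hab)
  have hq : Surjective q := fun k => by
    obtain ⟨e, he⟩ := hβ (h k)
    exact ⟨⟨(e, k), by simp [Y, he]⟩, rfl⟩
  have hexq : range j = ker q := by
    refine le_antisymm (by rintro _ ⟨n, rfl⟩; rfl) ?_
    rintro ⟨⟨e, k⟩, hy⟩ hk
    obtain rfl : k = 0 := by simpa [q] using hk
    obtain ⟨n, rfl⟩ := (hex e).mp (by simpa [Y, sub_eq_zero] using hy)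
    exact ⟨n, rfl⟩
  obtain ⟨s, hs⟩ := hN.exists_section hj hq hexq
  refine ⟨fst R E K ∘ₗ Y.subtype ∘ₗ s, ?_⟩
  ext k
  have hy : β (s k : E × K).1 - h (s k : E × K).2 = 0 := (s k).2
  have hk : (s k : E × K).2 = k := LinearMap.congr_fun hs k
  rw [hk, sub_eq_zero] at hy
  simpa using hy

theorem of_forall_exists_lift [Module.Injective R E] (hα : Injective α) (hex : Exact α β)
    (H : ∀ h : K →ₗ[R] C, ∃ H : K →ₗ[R] E, β ∘ₗ H = h) : Ext1Zero R K N := by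
  intro X _ _ i p hi hp hip
  obtain ⟨g, hg⟩ := Module.Injective.extension_property R E N X i hi α
  have hle : ker p ≤ ker (β ∘ₗ g) := by
    intro x hx
    obtain ⟨n, rfl⟩ := hip ▸ hx
    simp [← LinearMap.comp_apply (f := g), hg, hex.apply_apply_eq_zero]
  obtain ⟨h, hh⟩ := exists_comp_eq_of_ker_le hp hle
  obtain ⟨G, hG⟩ := H h
  have hgα : range (g - G ∘ₗ p) ≤ range α := by
    rintro _ ⟨x, rfl⟩
    refine (hex _).mp ?_
    have hβG : β (G (p x)) = h (p x) := LinearMap.congr_fun hG (p x)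
    have hhp : h (p x) = β (g x) := LinearMap.congr_fun hh x
    simp [hβG, hhp]
  obtain ⟨r, hr⟩ := exists_comp_eq_of_range_le hα hgα
  refine ⟨r, (cancel_left hα).mp ?_⟩
  have hpi : p ∘ₗ i = 0 := by
    ext n
    simp [← mem_ker, ← hip]
  rw [← LinearMap.comp_assoc, hr, sub_comp, LinearMap.comp_assoc, hpi, hg]
  simp

/-- Dimension shifting: for a projective presentation `0 → K' → P → K → 0` and an injective
copresentation `0 → N → E → C → 0`, both sides say that `Ext²(K, N) = 0`. -/
theorem iff_of_projective_of_injective [Module.Projective R P] [Module.Injective R E]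
    (hι : Injective ι) (hπ : Surjective π) (hιπ : Exact ι π)
    (hα : Injective α) (hβ : Surjective β) (hαβ : Exact α β) :
    Ext1Zero R K C ↔ Ext1Zero R K' N := by
  constructor
  · intro hC
    refine of_forall_exists_lift hα hαβ fun h => ?_
    obtain ⟨H, hH⟩ := hC.exists_extension hι hπ hιπ h
    obtain ⟨G, hG⟩ := Module.projective_lifting_property β H hβ
    exact ⟨G ∘ₗ ι, by rw [← LinearMap.comp_assoc, hG, hH]⟩
  · intro hN
    refine of_forall_exists_extension hπ hιπ fun h => ?_
    obtain ⟨H, hH⟩ := hN.exists_lift hα hβ hαβ h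
    obtain ⟨G, hG⟩ := Module.Injective.extension_property R E K' P ι hι H
    exact ⟨β ∘ₗ G, by rw [LinearMap.comp_assoc, hG, hH]⟩

end Ext1Zero

theorem exists_injective_module_embedding {R : Type u} [Ring R] (N : Type u) [AddCommGroup N]
    [Module R N] : ∃ (E : Type u) (_ : AddCommGroup E) (_ : Module R E) (α : N →ₗ[R] E),
      Injective α ∧ Module.Injective R E := by
  let E := CategoryTheory.Injective.under (ModuleCat.of R N)
  refine ⟨E, inferInstance, inferInstance, (CategoryTheory.Injective.ι (ModuleCat.of R N)).hom,
    (ModuleCat.mono_iff_injective _).mp inferInstance, ?_⟩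
  have : CategoryTheory.Injective (ModuleCat.of R E) :=
    inferInstanceAs (CategoryTheory.Injective E)
  exact Module.injective_module_of_injective_object R E

section

variable {R : Type u} [Ring R]

theorem ext1Zero_quotient_of_forall_projDimLE {d : ℕ} {N E : Type u} [AddCommGroup N]
    [Module R N] [AddCommGroup E] [Module R E] [Module.Injective R E] {α : N →ₗ[R] E}
    (hα : Injective α)
    (hN : ∀ (K : Type u) [AddCommGroup K] [Module R K], ProjDimLE R d K → Ext1Zero R K N)
    (K : Type u) [AddCommGroup K] [Module R K] (hK : ProjDimLE R (d + 1) K) :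
    Ext1Zero R K (E ⧸ range α) := by
  obtain ⟨ι, π, hπ, hker⟩ := hK
  exact (Ext1Zero.iff_of_projective_of_injective (ker π).injective_subtype hπ
    (exact_subtype_ker_map π) hα (range α).mkQ_surjective (exact_map_mkQ_range α)).mpr
    (hN _ hker)

theorem projDimLE_of_forall_ext1Zero (d : ℕ) (M : Type u) [AddCommGroup M] [Module R M]
    (hM : ∀ (N : Type u) [AddCommGroup N] [Module R N],
      (∀ (K : Type u) [AddCommGroup K] [Module R K], ProjDimLE R d K → Ext1Zero R K N) →
      Ext1Zero R M N) :
    ProjDimLE R d M := by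
  induction d generalizing M with
  | zero =>
    obtain ⟨f, hf⟩ : ∃ f : (M →₀ R) →ₗ[R] M, Surjective f :=
      ⟨_, Finsupp.linearCombination_id_surjective R M⟩
    have hM' : Ext1Zero R M (ker f) :=
      hM _ fun K _ _ (_ : Module.Projective R K) => Ext1Zero.of_projective K _
    obtain ⟨s, hs⟩ := hM'.exists_section (ker f).injective_subtype hf (ker f).range_subtype
    exact Module.Projective.of_split s f hs
  | succ d ih =>
    obtain ⟨f, hf⟩ : ∃ f : (M →₀ R) →ₗ[R] M, Surjective f :=
      ⟨_, Finsupp.linearCombination_id_surjective R M⟩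
    refine ⟨M, f, hf, ih _ fun N _ _ hN => ?_⟩
    obtain ⟨E, _, _, α, hα, _⟩ := exists_injective_module_embedding (R := R) N
    exact (Ext1Zero.iff_of_projective_of_injective (ker f).injective_subtype hf
      (exact_subtype_ker_map f) hα (range α).mkQ_surjective (exact_map_mkQ_range α)).mp
      (hM _ (ext1Zero_quotient_of_forall_projDimLE hα hN))

end

theorem fpdProj_projDimLE_general (R : Type u) [Ring R] (n : ℕ) (d : ℕ)
    (M : Type u) [AddCommGroup M] [Module R M] (hM : FPdProj R n (d : ℕ∞) M) :
    ProjDimLE R d M :=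
  projDimLE_of_forall_ext1Zero d M fun N _ _ hN => hM N fun K _ _ _ hK => hN K (hK d rfl)

/-- Every `FPₙ^{≤d}`-projective `R`-module has projective dimension at most `d`. -/
theorem fpdProj_projDimLE (R : Type u) [Ring R] (n : ℕ) (hn : 1 ≤ n) (d : ℕ) (hd : 1 ≤ d)
    (M : Type u) [AddCommGroup M] [Module R M] (hM : FPdProj R n (d : ℕ∞) M) :
    ProjDimLE R d M :=
  fpdProj_projDimLE_general R n d M hM
end
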